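/- arXiv:1502.00942 — 7 statements merged into one kernel-verified Lean document; each statement's English description precedes it below -/
import Mathlib

section
/- Let q ≥ 2 be an integer and A(z) an N×N matrix with entries in ℂ[z], with A = Σ_{j=0}^{d} A_j z^j. Suppose f(z) = Σ_{h≥0} c_h z^h ∈ ℂ[[z]]^N satisfies f(z) = A(z)·f(z^q). Let M_h be the maximum over 0 ≤ i ≤ h of the L¹-norms ‖c_i‖₁, and let ‖A‖ be the sum of the L¹-norms of the rows of A_0, …, A_d. Then M_h ≤ ‖A‖ · M_{⌊h/q⌋} for all h ≥ 1. -/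
/-!
Every `c i` with `i ≤ h` is, by the recursion, a sum of vectors `A j *ᵥ c m` with `j ≤ d` and
`m ≤ ⌊i/q⌋ ≤ ⌊h/q⌋`, each counted at most once, and `‖A j *ᵥ x‖₁` is bounded by the sum of the
`L¹`-norms of the rows of `A j` times `‖x‖₁`.
-/

open Finset Matrix

section L1Norm

variable {R m n ι : Type*} [SeminormedRing R] [Fintype m] [Fintype n]

theorem sum_norm_finsetSum_apply_le (S : Finset ι) (v : ι → n → R) :
    ∑ t, ‖(∑ j ∈ S, v j) t‖ ≤ ∑ j ∈ S, ∑ t, ‖v j t‖ :=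
  calc ∑ t, ‖(∑ j ∈ S, v j) t‖
      ≤ ∑ t, ∑ j ∈ S, ‖v j t‖ :=
        sum_le_sum fun t _ => by simpa only [Finset.sum_apply] using norm_sum_le S (v · t)
    _ = ∑ j ∈ S, ∑ t, ‖v j t‖ := sum_comm

theorem Matrix.sum_norm_mulVec_le (B : Matrix m n R) (x : n → R) :
    ∑ t, ‖(B *ᵥ x) t‖ ≤ (∑ i, ∑ k, ‖B i k‖) * ∑ k, ‖x k‖ :=
  calc ∑ t, ‖(B *ᵥ x) t‖
      ≤ ∑ t, ∑ k, ‖B t k‖ * ‖x k‖ := sum_le_sum fun t _ =>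
        (norm_sum_le _ _).trans (sum_le_sum fun k _ => norm_mul_le _ _)
    _ ≤ ∑ t, ∑ k, ‖B t k‖ * ∑ s, ‖x s‖ := by
        gcongr with t _ k
        exact single_le_sum (fun s _ => norm_nonneg (x s)) (mem_univ k)
    _ = (∑ i, ∑ k, ‖B i k‖) * ∑ k, ‖x k‖ := by simp only [sum_mul]

end L1Norm

theorem sum_norm_coeff_le_of_mahler_rec {R n : Type*} [SeminormedRing R] [Fintype n]
    (q d i : ℕ) (A : ℕ → Matrix n n R) (c : ℕ → n → R)
    (hrec : c i = ∑ j ∈ (range (min i d + 1)).filter (fun j => j % q = i % q),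
      A j *ᵥ c ((i - j) / q))
    (B : ℝ) (hB : ∀ m ≤ i / q, ∑ t, ‖c m t‖ ≤ B) :
    ∑ t, ‖c i t‖ ≤ (∑ j ∈ range (d + 1), ∑ a, ∑ k, ‖A j a k‖) * B := by
  set S := (range (min i d + 1)).filter (fun j => j % q = i % q)
  have hB_nonneg : 0 ≤ B :=
    (sum_nonneg fun t _ => norm_nonneg (c 0 t)).trans (hB 0 (Nat.zero_le _))
  have hS : S ⊆ range (d + 1) := fun j hj => by
    simp only [S, mem_filter, mem_range] at hj ⊢
    omega
  rw [hrec, sum_mul]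
  calc ∑ t, ‖(∑ j ∈ S, A j *ᵥ c ((i - j) / q)) t‖
      ≤ ∑ j ∈ S, ∑ t, ‖(A j *ᵥ c ((i - j) / q)) t‖ := sum_norm_finsetSum_apply_le _ _
    _ ≤ ∑ j ∈ S, (∑ a, ∑ k, ‖A j a k‖) * B := by
        gcongr with j
        refine (Matrix.sum_norm_mulVec_le _ _).trans ?_
        gcongr
        exact hB _ (Nat.div_le_div_right (Nat.sub_le i j))
    _ ≤ ∑ j ∈ range (d + 1), (∑ a, ∑ k, ‖A j a k‖) * B :=
        sum_le_sum_of_subset_of_nonneg hS fun j _ _ => by positivity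

theorem stmt2_general (q : ℕ) (N d : ℕ)
    (A : ℕ → Matrix (Fin N) (Fin N) ℂ) (c : ℕ → Fin N → ℂ)
    (hrec : ∀ h : ℕ, c h =
      ∑ j ∈ (Finset.range (min h d + 1)).filter (fun j => j % q = h % q),
        (A j).mulVec (c ((h - j) / q)))
    (M : ℕ → ℝ) (hM : ∀ h, M h = (Finset.range (h + 1)).sup' nonempty_range_add_one
      (fun i => ∑ t, ‖c i t‖))
    (normA : ℝ) (hnormA : normA = ∑ j ∈ Finset.range (d + 1), ∑ i, ∑ k, ‖A j i k‖) :
    ∀ h : ℕ, 1 ≤ h → M h ≤ normA * M (h / q) := by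
  intro h _
  rw [hM h, hnormA]
  refine sup'_le _ _ fun i hi => sum_norm_coeff_le_of_mahler_rec q d i A c (hrec i) _ ?_
  intro m hm
  rw [hM]
  refine le_sup' (fun i => ∑ t, ‖c i t‖) (mem_range.mpr (Nat.lt_succ_of_le ?_))
  exact hm.trans (Nat.div_le_div_right (Nat.lt_succ_iff.mp (mem_range.mp hi)))

/-- Coefficient estimate for Mahler systems with polynomial matrix: from the coefficient
recursion `c_h = Σ_{j ≡ h (mod q), j ≤ min(h,d)} A_j · c_{(h-j)/q}` one gets
`M_h ≤ ‖A‖ · M_{⌊h/q⌋}`, where `M_h` is the maximum of the `L¹`-norms of `c_0,…,c_h`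
and `‖A‖` is the sum of the `L¹`-norms of the rows of `A_0,…,A_d`. -/
theorem stmt2 (q : ℕ) (hq : 2 ≤ q) (N d : ℕ)
    (A : ℕ → Matrix (Fin N) (Fin N) ℂ) (c : ℕ → Fin N → ℂ)
    (hrec : ∀ h : ℕ, c h =
      ∑ j ∈ (Finset.range (min h d + 1)).filter (fun j => j % q = h % q),
        (A j).mulVec (c ((h - j) / q)))
    (M : ℕ → ℝ) (hM : ∀ h, M h = (Finset.range (h + 1)).sup' nonempty_range_add_one
      (fun i => ∑ t, ‖c i t‖))
    (normA : ℝ) (hnormA : normA = ∑ j ∈ Finset.range (d + 1), ∑ i, ∑ k, ‖A j i k‖) :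
    ∀ h : ℕ, 1 ≤ h → M h ≤ normA * M (h / q) :=
  stmt2_general q N d A c hrec M hM normA hnormA
end

section
/- Let q ≥ 2 be an integer and A(z) an N×N matrix of polynomials over ℂ. If f(z) ∈ ℂ[[z]]^N satisfies f(z) = A(z)·f(z^q) as formal power series, then each component of f has radius of convergence at least 1; in fact the coefficients of f grow at most polynomially: there is a constant C and exponent e such that every coefficient of f of index h ≥ 1 has absolute value at most C·h^e. -/
/-!
Put `S n = max_{k ≤ n} ∑ᵢ ‖[zᵏ] fᵢ‖`. Comparing coefficients in `f = A · f(z^q)` gives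
`S n ≤ B · S (n / q)`, where `B ≥ 1` bounds the total ℓ¹-norm of the coefficients of `A`.
Iterating `⌊log_q n⌋` times gives `S n ≤ B ^ ⌊log_q n⌋ · B S 0 ≤ n ^ (log_q B) · B S 0`,
and a power series with polynomially bounded coefficients converges on the open unit ball.
-/

open PowerSeries Finset

namespace Polynomial

variable {R : Type*} [SeminormedRing R]

lemma sum_range_norm_coeff_le (P : R[X]) (m : ℕ) :
    ∑ a ∈ range m, ‖P.coeff a‖ ≤ P.sum fun _ c => ‖c‖ := by
  rw [P.sum_over_range' (fun _ => norm_zero) (m + P.natDegree + 1) (by omega)]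
  exact sum_le_sum_of_subset_of_nonneg (range_subset_range.2 (by omega))
    fun _ _ _ => norm_nonneg _

lemma norm_sum_antidiagonal_coeff_mul_le (P : R[X]) (c : ℕ → R) {n : ℕ} {T : ℝ}
    (hc : ∀ m ≤ n, ‖c m‖ ≤ T) :
    ‖∑ p ∈ antidiagonal n, P.coeff p.1 * c p.2‖ ≤ (P.sum fun _ a => ‖a‖) * T := by
  have hT : 0 ≤ T := (norm_nonneg _).trans (hc 0 n.zero_le)
  calc ‖∑ p ∈ antidiagonal n, P.coeff p.1 * c p.2‖
      ≤ ∑ p ∈ antidiagonal n, ‖P.coeff p.1‖ * T := by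
        refine (norm_sum_le _ _).trans (sum_le_sum fun p hp => ?_)
        exact (norm_mul_le _ _).trans <| mul_le_mul_of_nonneg_left
          (hc _ (HasAntidiagonal.antidiagonal.snd_le hp)) (norm_nonneg _)
    _ = (∑ a ∈ range (n + 1), ‖P.coeff a‖) * T := by
        rw [← sum_mul, Nat.sum_antidiagonal_eq_sum_range_succ_mk]
    _ ≤ (P.sum fun _ a => ‖a‖) * T :=
        mul_le_mul_of_nonneg_right (P.sum_range_norm_coeff_le _) hT

end Polynomial

lemma le_pow_log_mul_of_le_mul_div {S : ℕ → ℝ} {B : ℝ} {q : ℕ} (hq : 1 < q) (hB : 0 ≤ B)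
    (hS : ∀ n, S n ≤ B * S (n / q)) (n : ℕ) : S n ≤ B ^ Nat.log q n * (B * S 0) := by
  induction n using Nat.strong_induction_on with
  | _ n ih =>
    rcases lt_or_ge n q with hn | hn
    · simpa [Nat.div_eq_of_lt hn, Nat.log_of_lt hn] using hS n
    · have hlog : Nat.log q n = Nat.log q (n / q) + 1 := by
        have := Nat.log_pos hq hn
        rw [Nat.log_div_base]
        omega
      calc S n ≤ B * S (n / q) := hS n
        _ ≤ B * (B ^ Nat.log q (n / q) * (B * S 0)) :=
            mul_le_mul_of_nonneg_left (ih _ (Nat.div_lt_self (by omega) hq)) hB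
        _ = B ^ Nat.log q n * (B * S 0) := by rw [hlog, pow_succ]; ring

lemma pow_log_le_rpow_logb {q : ℕ} (hq : 1 < q) {B : ℝ} (hB : 1 ≤ B) {n : ℕ} (hn : n ≠ 0) :
    B ^ Nat.log q n ≤ (n : ℝ) ^ Real.logb q B := by
  have hq' : (1 : ℝ) < q := by exact_mod_cast hq
  calc B ^ Nat.log q n = ((q : ℝ) ^ Nat.log q n) ^ Real.logb q B := by
        conv_lhs => rw [← Real.rpow_logb (by positivity) hq'.ne' (by positivity : 0 < B)]
        rw [← Real.rpow_mul_natCast (by positivity), mul_comm,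
          Real.rpow_natCast_mul (by positivity)]
    _ ≤ (n : ℝ) ^ Real.logb q B :=
        Real.rpow_le_rpow (by positivity) (by exact_mod_cast Nat.pow_log_le_self q hn)
          (Real.logb_nonneg hq' hB)

lemma summable_mul_pow_of_norm_le_mul_rpow {𝕜 : Type*} [NormedDivisionRing 𝕜] [CompleteSpace 𝕜]
    {a : ℕ → 𝕜} {C e : ℝ} (ha : ∀ n, 1 ≤ n → ‖a n‖ ≤ C * (n : ℝ) ^ e) {z : 𝕜} (hz : ‖z‖ < 1) :
    Summable fun n => a n * z ^ n := by
  have hC : 0 ≤ C := by simpa using (norm_nonneg _).trans (ha 1 le_rfl)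
  refine Summable.of_norm_bounded_eventually
    ((summable_pow_mul_geometric_of_norm_lt_one ⌈e⌉₊ (r := ‖z‖) (by simpa using hz)).mul_left C) ?_
  rw [Nat.cofinite_eq_atTop]
  filter_upwards [Filter.eventually_ge_atTop 1] with n hn
  have hpow : (n : ℝ) ^ e ≤ (n : ℝ) ^ ⌈e⌉₊ := by
    simpa using Real.rpow_le_rpow_of_exponent_le (by exact_mod_cast hn : (1 : ℝ) ≤ n)
      (Nat.le_ceil e)
  calc ‖a n * z ^ n‖ = ‖a n‖ * ‖z‖ ^ n := by rw [norm_mul, norm_pow]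
    _ ≤ C * (n : ℝ) ^ e * ‖z‖ ^ n := by gcongr; exact ha n hn
    _ ≤ C * ((n : ℝ) ^ ⌈e⌉₊ * ‖z‖ ^ n) := by
        rw [← mul_assoc]
        gcongr

section MahlerSystem

variable {R : Type*} [SeminormedRing R] {q N : ℕ}

/-- `f(z) = A(z) f(z^q)`, compared coefficientwise. -/
def IsMahlerSolution (q : ℕ) (A : Matrix (Fin N) (Fin N) (Polynomial R))
    (f : Fin N → PowerSeries R) : Prop :=
  ∀ (i : Fin N) (n : ℕ), coeff n (f i) =
    ∑ j, ∑ p ∈ antidiagonal n, (A i j).coeff p.1 *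
      (if q ∣ p.2 then coeff (p.2 / q) (f j) else 0)

noncomputable def supSumNormCoeff (f : Fin N → PowerSeries R) : ℕ → ℝ :=
  partialSups fun k => ∑ i, ‖coeff k (f i)‖

lemma norm_coeff_le_supSumNormCoeff (f : Fin N → PowerSeries R) (i : Fin N) {k n : ℕ}
    (hkn : k ≤ n) : ‖coeff k (f i)‖ ≤ supSumNormCoeff f n :=
  (single_le_sum (f := fun i => ‖coeff k (f i)‖) (fun _ _ => norm_nonneg _) (mem_univ i)).trans
    (le_partialSups_of_le (fun k => ∑ i, ‖coeff k (f i)‖) hkn)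

lemma supSumNormCoeff_nonneg (f : Fin N → PowerSeries R) (n : ℕ) : 0 ≤ supSumNormCoeff f n :=
  (sum_nonneg fun i _ => norm_nonneg (coeff 0 (f i))).trans
    (le_partialSups_of_le (fun k => ∑ i, ‖coeff k (f i)‖) n.zero_le)

variable {A : Matrix (Fin N) (Fin N) (Polynomial R)} {f : Fin N → PowerSeries R}

lemma IsMahlerSolution.norm_coeff_le (hf : IsMahlerSolution q A f) (i : Fin N) (k : ℕ) :
    ‖coeff k (f i)‖ ≤ (∑ j, (A i j).sum fun _ c => ‖c‖) * supSumNormCoeff f (k / q) := by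
  rw [hf i k, sum_mul]
  refine (norm_sum_le _ _).trans (sum_le_sum fun j _ =>
    (A i j).norm_sum_antidiagonal_coeff_mul_le (fun m => if q ∣ m then coeff (m / q) (f j) else 0)
      fun m hm => ?_)
  split_ifs
  · exact norm_coeff_le_supSumNormCoeff f j (Nat.div_le_div_right hm)
  · simpa using supSumNormCoeff_nonneg f _

lemma IsMahlerSolution.supSumNormCoeff_le_mul_div (hf : IsMahlerSolution q A f) (n : ℕ) :
    supSumNormCoeff f n ≤
      max (∑ i, ∑ j, (A i j).sum fun _ c => ‖c‖) 1 * supSumNormCoeff f (n / q) := by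
  refine partialSups_le _ _ _ fun m hm => ?_
  calc ∑ i, ‖coeff m (f i)‖
      ≤ ∑ i, (∑ j, (A i j).sum fun _ c => ‖c‖) * supSumNormCoeff f (m / q) :=
        sum_le_sum fun i _ => hf.norm_coeff_le i m
    _ ≤ max (∑ i, ∑ j, (A i j).sum fun _ c => ‖c‖) 1 * supSumNormCoeff f (n / q) := by
        rw [← sum_mul]
        exact mul_le_mul (le_max_left _ _) ((partialSups _).monotone (Nat.div_le_div_right hm))
          (supSumNormCoeff_nonneg f _) (zero_le_one.trans (le_max_right _ _))

lemma IsMahlerSolution.exists_norm_coeff_le_mul_rpow (hq : 1 < q) (hf : IsMahlerSolution q A f) :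
    ∃ C e : ℝ, ∀ (i : Fin N) (h : ℕ), 1 ≤ h → ‖coeff h (f i)‖ ≤ C * (h : ℝ) ^ e := by
  set B := max (∑ i, ∑ j, (A i j).sum fun _ c => ‖c‖) 1
  have hB : 1 ≤ B := le_max_right _ _
  refine ⟨B * supSumNormCoeff f 0, Real.logb q B, fun i h hh => ?_⟩
  have hS0 := supSumNormCoeff_nonneg f 0
  calc ‖coeff h (f i)‖ ≤ supSumNormCoeff f h := norm_coeff_le_supSumNormCoeff f i le_rfl
    _ ≤ B ^ Nat.log q h * (B * supSumNormCoeff f 0) :=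
        le_pow_log_mul_of_le_mul_div hq (by positivity) hf.supSumNormCoeff_le_mul_div h
    _ ≤ (h : ℝ) ^ Real.logb q B * (B * supSumNormCoeff f 0) := by
        gcongr
        exact pow_log_le_rpow_logb hq hB (by omega)
    _ = B * supSumNormCoeff f 0 * (h : ℝ) ^ Real.logb q B := mul_comm _ _

end MahlerSystem

/-- Solutions of a Mahler system `f(z) = A(z) f(z^q)` with polynomial matrix `A` have
components whose coefficients grow at most polynomially; in particular each component
series converges on the open unit disk. The functional equation is expressed
coefficientwise: the `n`-th coefficient of `f i` equals the `n`-th coefficient of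
`∑ j, A i j · (f j)(z^q)`. -/
theorem stmt3 (q : ℕ) (hq : 2 ≤ q) (N : ℕ)
    (A : Matrix (Fin N) (Fin N) (Polynomial ℂ)) (f : Fin N → PowerSeries ℂ)
    (heq : ∀ (i : Fin N) (n : ℕ), PowerSeries.coeff n (f i) =
      ∑ j, ∑ p ∈ Finset.HasAntidiagonal.antidiagonal n, (A i j).coeff p.1 *
        (if q ∣ p.2 then PowerSeries.coeff (p.2 / q) (f j) else 0)) :
    (∃ C e : ℝ, ∀ (i : Fin N) (h : ℕ), 1 ≤ h →
        ‖PowerSeries.coeff h (f i)‖ ≤ C * (h : ℝ) ^ e) ∧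
    (∀ (i : Fin N) (z : ℂ), ‖z‖ < 1 →
        Summable fun n : ℕ => PowerSeries.coeff n (f i) * z ^ n) := by
  have hf : IsMahlerSolution q A f := heq
  obtain ⟨C, e, hbound⟩ := hf.exists_norm_coeff_le_mul_rpow hq
  exact ⟨⟨C, e, hbound⟩, fun i _ hz => summable_mul_pow_of_norm_le_mul_rpow (hbound i) hz⟩
end

section
/- Let q ≥ 2 and let α ∈ ℂ with α ≠ 0. Define f(z) = 1/2 − (1/α + 1/α^q)·g(z) + (1/α^{q+1})·g(z²), where g(z) = Σ_{i≥0}(−1)^i z^{q^i}. Then f(z) + f(z^q) = (1 − z/α)(1 − z/α^q) as formal power series, and consequently f(α) + f(α^q) = 0 whenever 0 < |α| < 1 (so that the series converge at α and α^q). -/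
/-!
Write `S_m` for the substitution `z ↦ z^m`. The lacunary series `g = Σ (-1)^i z^(q^i)` satisfies
`g + S_q g = z`, its terms cancelling in pairs. Since `S_q` is linear, fixes constants and commutes
with `S_2`, for `f = 1/2 - (a + b) g + a b S_2 g` this gives
`f + S_q f = 1 - (a + b) z + a b z² = (1 - a z)(1 - b z)`.
For `|α| < 1` the bounded coefficients make `f` converge at `α` and `α^q`, and evaluating `S_q f`
at `α` is evaluating `f` at `α^q`; with `a = 1/α`, `b = 1/α^q` the sum `f(α) + f(α^q)` is thus the
value of `(1 - a z)(1 - b z)` at `z = α`, which is `0`.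
-/

open PowerSeries
open scoped Classical

/-- Substitution `z ↦ z^m` in a formal power series. -/
noncomputable def psSubstPow (m : ℕ) (g : PowerSeries ℂ) : PowerSeries ℂ :=
  PowerSeries.mk fun n => if m ∣ n then PowerSeries.coeff (n / m) g else 0

section psSubstPow

variable {m : ℕ}

@[simp]
theorem coeff_psSubstPow (n : ℕ) (F : PowerSeries ℂ) :
    coeff n (psSubstPow m F) = if m ∣ n then coeff (n / m) F else 0 :=
  coeff_mk _ _

theorem coeff_psSubstPow_mul (hm : m ≠ 0) (k : ℕ) (F : PowerSeries ℂ) :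
    coeff (m * k) (psSubstPow m F) = coeff k F := by
  rw [coeff_psSubstPow, if_pos (dvd_mul_right m k),
    Nat.mul_div_cancel_left k (Nat.pos_of_ne_zero hm)]

theorem psSubstPow_add (F G : PowerSeries ℂ) :
    psSubstPow m (F + G) = psSubstPow m F + psSubstPow m G := by
  ext n; simp only [coeff_psSubstPow, map_add]; split_ifs <;> simp

theorem psSubstPow_sub (F G : PowerSeries ℂ) :
    psSubstPow m (F - G) = psSubstPow m F - psSubstPow m G := by
  ext n; simp only [coeff_psSubstPow, map_sub]; split_ifs <;> simp

theorem psSubstPow_C_mul (c : ℂ) (F : PowerSeries ℂ) :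
    psSubstPow m (C c * F) = C c * psSubstPow m F := by
  ext n; simp only [coeff_psSubstPow, coeff_C_mul]; split_ifs <;> simp

theorem psSubstPow_C (c : ℂ) : psSubstPow m (C c) = C c := by
  ext n
  simp only [coeff_psSubstPow, coeff_C]
  by_cases hn : n = 0
  · simp [hn]
  · split_ifs with hd h0 <;>
      first | rfl | exact absurd (Nat.eq_zero_of_dvd_of_div_eq_zero hd h0) hn

theorem psSubstPow_X (hm : m ≠ 0) : psSubstPow m X = X ^ m := by
  ext n
  simp only [coeff_psSubstPow, coeff_X, coeff_X_pow]
  by_cases hd : m ∣ n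
  · obtain ⟨k, rfl⟩ := hd
    simp [Nat.mul_div_cancel_left k (Nat.pos_of_ne_zero hm), hm]
  · rw [if_neg hd, if_neg]
    rintro rfl
    exact hd dvd_rfl

theorem psSubstPow_psSubstPow (a b : ℕ) (F : PowerSeries ℂ) :
    psSubstPow a (psSubstPow b F) = psSubstPow (a * b) F := by
  ext n
  simp only [coeff_psSubstPow]
  by_cases hd : a ∣ n
  · simp only [if_pos hd, Nat.dvd_div_iff_mul_dvd hd, Nat.div_div_eq_div_mul]
  · rw [if_neg hd, if_neg fun h => hd (dvd_of_mul_right_dvd h)]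

end psSubstPow

/-- The paper's `f`, with `a = 1/α` and `b = 1/α^q`. -/
noncomputable def factorSeries (g : PowerSeries ℂ) (a b : ℂ) : PowerSeries ℂ :=
  C (1 / 2) - C (a + b) * g + C (a * b) * psSubstPow 2 g

theorem factorSeries_add_psSubstPow {q : ℕ} {g : PowerSeries ℂ}
    (hg : g + psSubstPow q g = X) (a b : ℂ) :
    factorSeries g a b + psSubstPow q (factorSeries g a b) = (1 - C a * X) * (1 - C b * X) := by
  have hg2 : psSubstPow 2 g + psSubstPow 2 (psSubstPow q g) = X ^ 2 := by
    rw [← psSubstPow_add, hg, psSubstPow_X two_ne_zero]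
  have hhalf : C (1 / 2 : ℂ) + C (1 / 2) = 1 := by
    rw [← map_add, add_halves, map_one]
  rw [factorSeries, psSubstPow_add, psSubstPow_sub, psSubstPow_C, psSubstPow_C_mul,
    psSubstPow_C_mul, psSubstPow_psSubstPow, mul_comm q 2, ← psSubstPow_psSubstPow, map_add,
    map_mul]
  linear_combination C a * C b * hg2 - (C a + C b) * hg + hhalf

/-- `Σ_{i ≥ 0} (-1)^i z^(q^i)`. -/
noncomputable def lacunarySeries (q : ℕ) : PowerSeries ℂ :=
  mk fun n => if ∃ i : ℕ, q ^ i = n then (-1 : ℂ) ^ (Nat.log q n) else 0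

section lacunarySeries

variable {q : ℕ}

theorem coeff_lacunarySeries_pow (hq : 2 ≤ q) (i : ℕ) :
    coeff (q ^ i) (lacunarySeries q) = (-1) ^ i := by
  rw [lacunarySeries, coeff_mk, if_pos ⟨i, rfl⟩, Nat.log_pow (by omega)]

theorem coeff_lacunarySeries_of_ne_pow {n : ℕ} (h : ∀ i, q ^ i ≠ n) :
    coeff n (lacunarySeries q) = 0 := by
  rw [lacunarySeries, coeff_mk, if_neg (not_exists.2 h)]

theorem norm_coeff_lacunarySeries_le (n : ℕ) : ‖coeff n (lacunarySeries q)‖ ≤ 1 := by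
  rw [lacunarySeries, coeff_mk]
  split_ifs <;> simp

theorem lacunarySeries_add_psSubstPow (hq : 2 ≤ q) :
    lacunarySeries q + psSubstPow q (lacunarySeries q) = X := by
  ext n
  rw [map_add, coeff_X]
  by_cases hd : q ∣ n
  · obtain ⟨k, rfl⟩ := hd
    have hk1 : q * k ≠ 1 := fun h => by have := Nat.eq_one_of_mul_eq_one_right h; omega
    rw [coeff_psSubstPow_mul (by omega), if_neg hk1]
    by_cases hk : ∃ i, q ^ i = k
    · obtain ⟨i, rfl⟩ := hk
      rw [← pow_succ', coeff_lacunarySeries_pow hq, coeff_lacunarySeries_pow hq, pow_succ]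
      ring
    · push Not at hk
      rw [coeff_lacunarySeries_of_ne_pow hk, coeff_lacunarySeries_of_ne_pow, add_zero]
      rintro (_ | i) hi
      · exact hk1 (by simpa using hi.symm)
      · exact hk i (Nat.eq_of_mul_eq_mul_left (show 0 < q by omega) (by rw [← pow_succ', hi]))
  · rw [coeff_psSubstPow, if_neg hd, add_zero]
    split_ifs with hn
    · subst hn
      simpa using coeff_lacunarySeries_pow hq 0
    · apply coeff_lacunarySeries_of_ne_pow
      rintro (_ | i) hi
      · exact hn (by simpa using hi.symm)
      · exact hd (hi ▸ dvd_pow_self q i.succ_ne_zero)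

end lacunarySeries

noncomputable def psEval (F : PowerSeries ℂ) (z : ℂ) : ℂ :=
  ∑' n, coeff n F * z ^ n

theorem summable_coeff_mul_pow_of_norm_le {F : PowerSeries ℂ} {M : ℝ}
    (hF : ∀ n, ‖coeff n F‖ ≤ M) {z : ℂ} (hz : ‖z‖ < 1) :
    Summable fun n => coeff n F * z ^ n := by
  refine Summable.of_norm_bounded
    ((summable_geometric_of_lt_one (norm_nonneg z) hz).mul_left M) fun n => ?_
  rw [norm_mul, norm_pow]
  exact mul_le_mul_of_nonneg_right (hF n) (by positivity)

theorem norm_coeff_C_le (c : ℂ) (n : ℕ) : ‖coeff n (C c)‖ ≤ ‖c‖ := by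
  rw [coeff_C]
  split_ifs <;> simp

section psSubstPow

variable {m : ℕ}

theorem coeff_psSubstPow_mul_pow_comp_mul (hm : m ≠ 0) (F : PowerSeries ℂ) (z : ℂ) :
    ((fun n => coeff n (psSubstPow m F) * z ^ n) ∘ (m * ·)) =
      fun k => coeff k F * (z ^ m) ^ k := by
  ext k
  rw [Function.comp_apply, coeff_psSubstPow_mul hm, pow_mul]

theorem coeff_psSubstPow_mul_pow_eq_zero_of_notMem_range (F : PowerSeries ℂ) (z : ℂ) {n : ℕ}
    (hn : n ∉ Set.range (m * ·)) : coeff n (psSubstPow m F) * z ^ n = 0 := by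
  rw [coeff_psSubstPow, if_neg fun ⟨k, hk⟩ => hn ⟨k, hk.symm⟩, zero_mul]

theorem summable_coeff_psSubstPow_mul_pow_iff (hm : m ≠ 0) (F : PowerSeries ℂ) (z : ℂ) :
    (Summable fun n => coeff n (psSubstPow m F) * z ^ n) ↔
      Summable fun k => coeff k F * (z ^ m) ^ k := by
  rw [← coeff_psSubstPow_mul_pow_comp_mul hm,
    (mul_right_injective₀ hm).summable_iff fun _ =>
      coeff_psSubstPow_mul_pow_eq_zero_of_notMem_range F z]

theorem psEval_psSubstPow (hm : m ≠ 0) (F : PowerSeries ℂ) (z : ℂ) :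
    psEval (psSubstPow m F) z = psEval F (z ^ m) := by
  rw [psEval, psEval, ← coeff_psSubstPow_mul_pow_comp_mul hm F z]
  refine ((mul_right_injective₀ hm).tsum_eq fun n hn => ?_).symm
  by_contra hr
  exact hn (coeff_psSubstPow_mul_pow_eq_zero_of_notMem_range F z hr)

end psSubstPow

theorem psEval_add {F G : PowerSeries ℂ} {z : ℂ} (hF : Summable fun n => coeff n F * z ^ n)
    (hG : Summable fun n => coeff n G * z ^ n) :
    psEval (F + G) z = psEval F z + psEval G z := by
  simp only [psEval, map_add, add_mul]
  exact hF.tsum_add hG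

theorem psEval_coe (p : Polynomial ℂ) (z : ℂ) : psEval p z = p.eval z := by
  simp only [psEval, Polynomial.eval_eq_sum_range, Polynomial.coeff_coe]
  apply tsum_eq_sum
  intro n hn
  rw [Polynomial.coeff_eq_zero_of_natDegree_lt (by simpa using hn), zero_mul]

theorem summable_coeff_factorSeries_mul_pow {g : PowerSeries ℂ} {M : ℝ}
    (hg : ∀ n, ‖coeff n g‖ ≤ M) (a b : ℂ) {z : ℂ} (hz : ‖z‖ < 1) :
    Summable fun n => coeff n (factorSeries g a b) * z ^ n := by
  have hz2 : ‖z ^ 2‖ < 1 := by rw [norm_pow]; exact pow_lt_one₀ (norm_nonneg z) hz two_ne_zero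
  have hC := summable_coeff_mul_pow_of_norm_le (norm_coeff_C_le (1 / 2)) hz
  have hg1 := summable_coeff_mul_pow_of_norm_le hg hz
  have hg2 := (summable_coeff_psSubstPow_mul_pow_iff two_ne_zero g z).2
    (summable_coeff_mul_pow_of_norm_le hg hz2)
  refine ((hC.sub (hg1.mul_left (a + b))).add (hg2.mul_left (a * b))).congr fun n => ?_
  rw [factorSeries, map_add (coeff n), map_sub (coeff n), coeff_C_mul, coeff_C_mul]
  ring

theorem psEval_one_sub_C_mul_X_mul (a b z : ℂ) :
    psEval ((1 - C a * X) * (1 - C b * X)) z = (1 - a * z) * (1 - b * z) := by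
  have hpoly : (1 - C a * X) * (1 - C b * X) =
      (((1 - Polynomial.C a * Polynomial.X) * (1 - Polynomial.C b * Polynomial.X) :
        Polynomial ℂ) : PowerSeries ℂ) := by
    push_cast
    rfl
  rw [hpoly, psEval_coe]
  simp

theorem stmt8_general (q : ℕ) (hq : 2 ≤ q) (α : ℂ)
    (g f : PowerSeries ℂ)
    (hg : g = PowerSeries.mk fun n =>
      if ∃ i : ℕ, q ^ i = n then (-1 : ℂ) ^ (Nat.log q n) else 0)
    (hf : f = PowerSeries.C (1/2) - PowerSeries.C (1/α + 1/α^q) * g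
      + PowerSeries.C (1/α^(q+1)) * psSubstPow 2 g) :
    f + psSubstPow q f =
      (1 - PowerSeries.C (1/α) * PowerSeries.X) *
        (1 - PowerSeries.C (1/α^q) * PowerSeries.X) ∧
    (0 < ‖α‖ → ‖α‖ < 1 →
      (∑' n : ℕ, PowerSeries.coeff n f * α ^ n) +
        (∑' n : ℕ, PowerSeries.coeff n f * (α ^ q) ^ n) = 0) := by
  obtain rfl : g = lacunarySeries q := hg
  rw [pow_succ', ← one_div_mul_one_div] at hf
  obtain rfl : f = factorSeries (lacunarySeries q) (1 / α) (1 / α ^ q) := hf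
  have hformal :=
    factorSeries_add_psSubstPow (lacunarySeries_add_psSubstPow hq) (1 / α) (1 / α ^ q)
  refine ⟨hformal, fun hα0 hα1 => ?_⟩
  have hq0 : q ≠ 0 := by omega
  have hαq : ‖α ^ q‖ < 1 := by rw [norm_pow]; exact pow_lt_one₀ (norm_nonneg α) hα1 hq0
  have hsummable {z : ℂ} (hz : ‖z‖ < 1) :=
    summable_coeff_factorSeries_mul_pow (norm_coeff_lacunarySeries_le (q := q))
      (1 / α) (1 / α ^ q) hz
  change psEval _ α + psEval _ (α ^ q) = 0
  rw [← psEval_psSubstPow hq0, ← psEval_add (hsummable hα1)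
    ((summable_coeff_psSubstPow_mul_pow_iff hq0 _ α).2 (hsummable hαq)), hformal,
    psEval_one_sub_C_mul_X_mul]
  field_simp [norm_pos_iff.1 hα0]
  ring

/-- With `g(z) = Σ (−1)^i z^{q^i}` and
`f(z) = 1/2 − (1/α + 1/α^q) g(z) + (1/α^{q+1}) g(z²)`, one has
`f(z) + f(z^q) = (1 − z/α)(1 − z/α^q)`, and hence `f(α) + f(α^q) = 0`
when `0 < |α| < 1`. -/
theorem stmt8 (q : ℕ) (hq : 2 ≤ q) (α : ℂ) (hα : α ≠ 0)
    (g f : PowerSeries ℂ)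
    (hg : g = PowerSeries.mk fun n =>
      if ∃ i : ℕ, q ^ i = n then (-1 : ℂ) ^ (Nat.log q n) else 0)
    (hf : f = PowerSeries.C (1/2) - PowerSeries.C (1/α + 1/α^q) * g
      + PowerSeries.C (1/α^(q+1)) * psSubstPow 2 g) :
    f + psSubstPow q f =
      (1 - PowerSeries.C (1/α) * PowerSeries.X) *
        (1 - PowerSeries.C (1/α^q) * PowerSeries.X) ∧
    (0 < ‖α‖ → ‖α‖ < 1 →
      (∑' n : ℕ, PowerSeries.coeff n f * α ^ n) +
        (∑' n : ℕ, PowerSeries.coeff n f * (α ^ q) ^ n) = 0) :=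
  stmt8_general q hq α g f hg hf
end

section
/- Let S be the set of nonnegative integers whose base-3 expansion has an even number of nonzero digits, and let f(z) = 1 + Σ_{i∈S} z^i ∈ ℂ[[z]]. Then f satisfies the functional equation (z² + z − 1)·f(z³) + f(z) − (z + z²)/(1 − z³) = 0, i.e., (1 − z³)·(z² + z − 1)·f(z³) + (1 − z³)·f(z) = z + z². -/
/-!
Write `a n` for the coefficients of `f`. Appending a digit `0` to the base-3 expansion keeps the
number of nonzero digits and appending `1` or `2` changes its parity, so `a (3k) = a k` and
`a (3k+1) = a (3k+2) = 1 - a k`. Splitting `f` by residues mod 3 therefore gives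
`f(z) = f(z³) + (z + z²) (1/(1 - z³) - f(z³))`, which is the identity after clearing denominators.
-/

open PowerSeries

theorem psSubstPow_eq_expand {m : ℕ} (hm : m ≠ 0) (g : ℂ⟦X⟧) :
    psSubstPow m g = expand m hm g := by
  ext n
  rw [psSubstPow, coeff_mk, coeff_expand]

def nonzeroDigitCount (b n : ℕ) : ℕ :=
  ((Nat.digits b n).filter (fun d => d ≠ 0)).length

theorem nonzeroDigitCount_mul_add {b : ℕ} (hb : 1 < b) (k : ℕ) {r : ℕ} (hr : r < b) :
    nonzeroDigitCount b (b * k + r) = nonzeroDigitCount b k + if r = 0 then 0 else 1 := by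
  rcases eq_or_ne r 0 with rfl | hr0
  · rcases eq_or_ne k 0 with rfl | hk
    · simp [nonzeroDigitCount]
    · rw [nonzeroDigitCount, add_comm, Nat.digits_add b hb 0 k hr (Or.inr hk)]
      simp [nonzeroDigitCount]
  · rw [nonzeroDigitCount, add_comm, Nat.digits_add b hb r k hr (Or.inl hr0)]
    simp [nonzeroDigitCount, hr0]

namespace PowerSeries

variable {R : Type*} [CommRing R]

noncomputable def residuePart (m r : ℕ) (φ : R⟦X⟧) : R⟦X⟧ :=
  mk fun k => coeff (m * k + r) φ

theorem sum_X_pow_mul_expand_residuePart {m : ℕ} (hm : m ≠ 0) (φ : R⟦X⟧) :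
    ∑ r ∈ Finset.range m, X ^ r * expand m hm (residuePart m r φ) = φ := by
  ext n
  simp only [map_sum, coeff_X_pow_mul', coeff_expand, residuePart, coeff_mk]
  rw [Finset.sum_eq_single (n % m)]
  · have hle : n % m ≤ n := Nat.mod_le n m
    have hdvd : m ∣ n - n % m := Nat.dvd_sub_mod n
    rw [if_pos hle, if_pos hdvd, Nat.mul_div_cancel' hdvd, Nat.sub_add_cancel hle]
  · intro r hr hne
    split_ifs with hle hdvd
    · obtain ⟨c, hc⟩ := hdvd
      refine absurd ?_ hne
      rw [show n = r + m * c by omega, Nat.add_mul_mod_self_left,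
        Nat.mod_eq_of_lt (Finset.mem_range.mp hr)]
    all_goals rfl
  · exact fun h => (h (Finset.mem_range.mpr (Nat.mod_lt n (Nat.pos_of_ne_zero hm)))).elim

noncomputable def evenNonzeroDigitsSeries (b : ℕ) : R⟦X⟧ :=
  mk fun i => if Even (nonzeroDigitCount b i) then 1 else 0

theorem residuePart_zero_evenNonzeroDigitsSeries {b : ℕ} (hb : 1 < b) :
    residuePart b 0 (evenNonzeroDigitsSeries b : R⟦X⟧) = evenNonzeroDigitsSeries b := by
  ext k
  have h := nonzeroDigitCount_mul_add hb k (by omega : 0 < b)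
  rw [if_pos rfl, add_zero] at h
  simp only [residuePart, evenNonzeroDigitsSeries, coeff_mk, add_zero, h]

theorem residuePart_evenNonzeroDigitsSeries_of_ne_zero {b r : ℕ} (hb : 1 < b) (hr0 : r ≠ 0)
    (hr : r < b) :
    residuePart b r (evenNonzeroDigitsSeries b : R⟦X⟧) = mk 1 - evenNonzeroDigitsSeries b := by
  ext k
  simp only [residuePart, evenNonzeroDigitsSeries, coeff_mk, map_sub,
    nonzeroDigitCount_mul_add hb k hr, if_neg hr0, Nat.even_add_one, Pi.one_apply]
  split_ifs <;> simp

end PowerSeries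

/-- The generating series `f(z) = 1 + Σ_{i ∈ S} z^i` of the set `S` of nonnegative
integers with an even number of nonzero base-3 digits (note `0 ∈ S`, giving the constant
term `1`) satisfies `(1 − z³)(z² + z − 1) f(z³) + (1 − z³) f(z) = z + z²`. -/
theorem stmt10 (f : PowerSeries ℂ)
    (hf : f = PowerSeries.mk fun i =>
      if Even (((Nat.digits 3 i).filter (fun d => d ≠ 0)).length) then (1 : ℂ) else 0) :
    (1 - PowerSeries.X ^ 3) * (PowerSeries.X ^ 2 + PowerSeries.X - 1) * psSubstPow 3 f
      + (1 - PowerSeries.X ^ 3) * f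
      = PowerSeries.X + PowerSeries.X ^ 2 := by
  change f = evenNonzeroDigitsSeries 3 at hf
  have hsplit := sum_X_pow_mul_expand_residuePart three_ne_zero f
  simp only [Finset.sum_range_succ, Finset.sum_range_zero, hf,
    residuePart_zero_evenNonzeroDigitsSeries (by norm_num : 1 < 3),
    residuePart_evenNonzeroDigitsSeries_of_ne_zero (by norm_num : 1 < 3) one_ne_zero
      (by norm_num : 1 < 3),
    residuePart_evenNonzeroDigitsSeries_of_ne_zero (by norm_num : 1 < 3) two_ne_zero
      (by norm_num : 2 < 3), map_sub] at hsplit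
  have hgeom : expand 3 three_ne_zero (mk 1 : ℂ⟦X⟧) * (1 - X ^ 3) = 1 := by
    simpa using congrArg (expand 3 three_ne_zero) (mk_one_mul_one_sub_eq_one ℂ)
  rw [psSubstPow_eq_expand three_ne_zero, hf]
  linear_combination (X + X ^ 2) * hgeom - (1 - X ^ 3) * hsplit
end

section
/- Let α = (√5 − 1)/2 and let S be the set of nonnegative integers whose base-3 expansion has an even number of nonzero digits, f(z) = 1 + Σ_{i∈S} z^i. Then f(α) = 1/(3 − √5). -/
/-- Let `S` be the set of nonnegative integers whose base-3 expansion has an even number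
of nonzero digits and `f(z) = Σ_{i ∈ S} z^i` (equal to `1 + Σ_{0 ≠ i ∈ S} z^i`, since
`0 ∈ S`). Then `f((√5 − 1)/2) = 1/(3 − √5)`. -/
theorem stmt11 :
    (∑' i : ℕ,
      (if Even (((Nat.digits 3 i).filter (fun d => d ≠ 0)).length)
        then ((Real.sqrt 5 - 1) / 2) ^ i else 0))
      = 1 / (3 - Real.sqrt 5) := by
  have h5 : Real.sqrt 5 ^ 2 = 5 := Real.sq_sqrt (by norm_num)
  have h5lb : 2 < Real.sqrt 5 := by nlinarith [Real.sqrt_nonneg 5]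
  have h5ub : Real.sqrt 5 < 3 := by nlinarith [Real.sqrt_nonneg 5]
  set a : ℝ := (Real.sqrt 5 - 1) / 2 with ha
  have ha0 : 0 ≤ a := by rw [ha]; nlinarith
  have ha1 : a < 1 := by rw [ha]; nlinarith
  have hsq : a ^ 2 = 1 - a := by rw [ha]; nlinarith
  set c : ℕ → ℝ := fun i =>
    if Even (((Nat.digits 3 i).filter (fun d => d ≠ 0)).length) then a ^ i else 0 with hcdef
  have hc_nonneg : ∀ i, 0 ≤ c i := by
    intro i; simp only [hcdef]; split
    · positivity
    · exact le_refl 0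
  have hc_le : ∀ i, c i ≤ a ^ i := by
    intro i; simp only [hcdef]; split
    · exact le_refl _
    · positivity
  have hgeo : Summable (fun i : ℕ => a ^ i) := summable_geometric_of_lt_one ha0 ha1
  have hc : Summable c := Summable.of_nonneg_of_le hc_nonneg hc_le hgeo
  have key : ∀ m : ℕ, (∑ r : Fin 3, c (m * 3 + (r : ℕ))) = (a ^ 3) ^ m := by
    intro m
    rw [Fin.sum_univ_three]
    show c (m*3+0) + c (m*3+1) + c (m*3+2) = (a ^ 3) ^ m
    rcases Nat.eq_zero_or_pos m with hm | hm
    · subst hm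
      norm_num [hcdef]
    · have h3 : (1:ℕ) < 3 := by norm_num
      have d0 : Nat.digits 3 (m*3) = 0 :: Nat.digits 3 m := by
        rw [Nat.digits_def' h3 (by positivity)]
        congr 1
        · omega
        · congr 1; omega
      have d1 : Nat.digits 3 (m*3+1) = 1 :: Nat.digits 3 m := by
        rw [Nat.digits_def' h3 (by positivity)]
        congr 1
        · omega
        · congr 1; omega
      have d2 : Nat.digits 3 (m*3+2) = 2 :: Nat.digits 3 m := by
        rw [Nat.digits_def' h3 (by positivity)]
        congr 1
        · omega
        · congr 1; omega
      have len0 : ((Nat.digits 3 (m*3)).filter (fun d => d ≠ 0)).length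
          = ((Nat.digits 3 m).filter (fun d => d ≠ 0)).length := by
        rw [d0]; simp
      have len1 : ((Nat.digits 3 (m*3+1)).filter (fun d => d ≠ 0)).length
          = ((Nat.digits 3 m).filter (fun d => d ≠ 0)).length + 1 := by
        rw [d1]; simp
      have len2 : ((Nat.digits 3 (m*3+2)).filter (fun d => d ≠ 0)).length
          = ((Nat.digits 3 m).filter (fun d => d ≠ 0)).length + 1 := by
        rw [d2]; simp
      have hp : (a ^ 3) ^ m = a ^ (m*3) := by rw [← pow_mul, mul_comm]
      simp only [hcdef, add_zero, len0, len1, len2, Nat.even_add_one]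
      by_cases hE : Even (((Nat.digits 3 m).filter (fun d => d ≠ 0)).length)
      · rw [if_pos hE, if_neg (by simpa using hE), if_neg (by simpa using hE), hp]; ring
      · rw [if_neg hE, if_pos (by simpa using hE), if_pos (by simpa using hE), hp]
        have h1 : a^(m*3+1) + a^(m*3+2) = a^(m*3) * (a + a^2) := by ring
        rw [zero_add, h1, hsq]; ring
  have hsum2 : Summable (fun p : ℕ × Fin 3 => c ((Nat.divModEquiv 3).symm p)) :=
    hc.comp_injective ((Nat.divModEquiv 3).symm.injective)
  calc (∑' i, c i) = ∑' p : ℕ × Fin 3, c ((Nat.divModEquiv 3).symm p) :=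
        ((Nat.divModEquiv 3).symm.tsum_eq c).symm
    _ = ∑' m : ℕ, ∑' r : Fin 3, c ((Nat.divModEquiv 3).symm (m, r)) := Summable.tsum_prod hsum2
    _ = ∑' m : ℕ, (a^3)^m := by
        apply tsum_congr
        intro m
        rw [tsum_fintype]
        simpa [Nat.divModEquiv] using key m
    _ = (1 - a^3)⁻¹ := tsum_geometric_of_lt_one (by positivity) (by nlinarith)
    _ = 1 / (3 - Real.sqrt 5) := by
        rw [one_div]
        congr 1
        rw [ha]
        linear_combination ((3 - Real.sqrt 5)/8) * h5
end

section
/- Let k₀ ⊆ ℂ be a number field, α ∈ k₀, 0 < |α| < 1, and f₁,…,f_ℓ ∈ k₀[[z]] series converging at α. Assume the following specialization property holds: for every linear polynomial P ∈ ℚ̄[X₁,…,X_N] (N ≥ ℓ, possibly with constant term) vanishing at (f₁(α),…,f_N(α)), there exists Q ∈ ℚ̄[z, X₁,…,X_N], linear in the X-variables, with Q(z, f₁(z),…,f_N(z)) = 0 and P(X) = Q(α, X). If f₁(α),…,f_ℓ(α) are linearly independent over k₀, then they are linearly independent over ℚ̄. -/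
/-!
A relation `∑ λᵢ fᵢ(α) = 0` with algebraic `λᵢ` lifts, by the specialization property, to
`c₀ + ∑ cᵢ fᵢ = 0` in `ℂ⟦z⟧` with `c₀(α) = 0` and `cᵢ(α) = λᵢ`. Applying a `k₀`-linear
functional `L : ℂ → k₀` to the coefficients of the `cᵢ` preserves this relation, because the
`fᵢ` have coefficients in `k₀`, and commutes with evaluation at `α ∈ k₀`. Evaluating at `α`
gives the `k₀`-relation `∑ L(λᵢ) fᵢ(α) = 0`, so `L(λᵢ) = 0` for every `L`, i.e. `λᵢ = 0`.
(Running over all functionals replaces the decomposition over a `k₀`-basis of the span of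
the coefficients.)
-/

open PowerSeries Polynomial

namespace PowerSeries

section HasSumAt

variable {R : Type*} [CommSemiring R] [TopologicalSpace R]

def HasSumAt (p : R⟦X⟧) (x a : R) : Prop :=
  HasSum (fun n => coeff n p * x ^ n) a

theorem hasSumAt_zero (x : R) : (0 : R⟦X⟧).HasSumAt x 0 := by
  simp [HasSumAt, hasSum_zero]

theorem HasSumAt.add [ContinuousAdd R] {p q : R⟦X⟧} {x a b : R} (hp : p.HasSumAt x a)
    (hq : q.HasSumAt x b) : (p + q).HasSumAt x (a + b) := by
  simpa only [HasSumAt, map_add, add_mul] using HasSum.add hp hq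

theorem HasSumAt.sum [ContinuousAdd R] {ι : Type*} {s : Finset ι} {p : ι → R⟦X⟧} {x : R}
    {a : ι → R} (hp : ∀ i ∈ s, (p i).HasSumAt x (a i)) :
    (∑ i ∈ s, p i).HasSumAt x (∑ i ∈ s, a i) := by
  simpa only [HasSumAt, map_sum, Finset.sum_mul] using hasSum_sum hp

theorem HasSumAt.map {S : Type*} [CommSemiring S] [TopologicalSpace S] {p : R⟦X⟧} {x a : R}
    (hp : p.HasSumAt x a) (φ : R →+* S) (hφ : Continuous φ) : (p.map φ).HasSumAt (φ x) (φ a) := by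
  simpa [HasSumAt, Function.comp_def] using HasSum.map hp φ hφ

end HasSumAt

theorem HasSumAt.mul {𝕜 : Type*} [RCLike 𝕜] {p q : 𝕜⟦X⟧} {x a b : 𝕜} (hp : p.HasSumAt x a)
    (hq : q.HasSumAt x b) : (p * q).HasSumAt x (a * b) := by
  -- in finite dimension summable series are absolutely summable, so the Cauchy product applies
  unfold HasSumAt at hp hq ⊢
  have hp' := summable_norm_iff.mpr hp.summable
  have hq' := summable_norm_iff.mpr hq.summable
  have h := (summable_norm_sum_mul_antidiagonal_of_summable_norm hp' hq').of_norm.hasSum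
  rw [← tsum_mul_tsum_eq_tsum_sum_antidiagonal_of_summable_norm hp' hq', hp.tsum_eq,
    hq.tsum_eq] at h
  refine (funext fun n => ?_ : (fun n => coeff n (p * q) * x ^ n) = _) ▸ h
  rw [coeff_mul, Finset.sum_mul]
  refine Finset.sum_congr rfl fun kl hkl => ?_
  rw [← Finset.HasAntidiagonal.mem_antidiagonal.mp hkl, pow_add]
  ring

section MapLinear

variable {R A : Type*} [CommSemiring R] [Semiring A] [Algebra R A]

noncomputable def mapLinear (L : A →ₗ[R] R) : A⟦X⟧ →ₗ[R] R⟦X⟧ where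
  toFun p := mk fun n => L (coeff n p)
  map_add' p q := by ext; simp
  map_smul' r p := by ext; simp

@[simp]
theorem coeff_mapLinear (L : A →ₗ[R] R) (p : A⟦X⟧) (n : ℕ) :
    coeff n (mapLinear L p) = L (coeff n p) := by
  simp [mapLinear]

theorem mapLinear_mul_map (L : A →ₗ[R] R) (p : A⟦X⟧) (g : R⟦X⟧) :
    mapLinear L (p * g.map (algebraMap R A)) = mapLinear L p * g := by
  ext n
  simp only [coeff_mapLinear, coeff_mul, coeff_map, map_sum]
  refine Finset.sum_congr rfl fun kl _ => ?_
  rw [← Algebra.commutes, ← Algebra.smul_def, map_smul, smul_eq_mul, mul_comm]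

theorem hasSumAt_mapLinear_coe [TopologicalSpace R] (L : A →ₗ[R] R) (p : A[X]) (x : R) :
    (mapLinear L p).HasSumAt x (L (p.eval (algebraMap R A x))) := by
  rw [HasSumAt, Polynomial.eval_eq_sum_range, map_sum]
  have hterm : ∀ n, L (p.coeff n * algebraMap R A x ^ n) = L (p.coeff n) * x ^ n := fun n => by
    rw [← map_pow, ← Algebra.commutes, ← Algebra.smul_def, map_smul, smul_eq_mul, mul_comm]
  simp only [hterm, coeff_mapLinear, Polynomial.coeff_coe]
  refine hasSum_sum_of_ne_finset_zero fun n hn => ?_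
  rw [Polynomial.coeff_eq_zero_of_natDegree_lt (by simpa [Nat.lt_succ_iff] using hn), map_zero,
    zero_mul]

end MapLinear

end PowerSeries

theorem Function.Injective.sum_apply_extend_zero {ι κ M N : Type*} [Fintype ι] [Fintype κ]
    [Zero M] [AddCommMonoid N] {e : ι → κ} (he : e.Injective) (g : ι → M) (F : κ → M → N)
    (hF : ∀ k, F k 0 = 0) : ∑ k, F k (Function.extend e g 0 k) = ∑ i, F (e i) (g i) :=
  (Fintype.sum_of_injective e he _ _
    (fun k hk => by rw [Function.extend_apply' _ _ _ (by simpa using hk), Pi.zero_apply, hF])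
    (fun i => by rw [he.extend_apply])).symm

theorem Subfield.dual_add_sum_mul_eq_zero {𝕜 : Type*} [RCLike 𝕜] {ι : Type*} [Fintype ι]
    (K : Subfield 𝕜) (L : Module.Dual K 𝕜) (α : K) (f : ι → K⟦X⟧) (v : ι → 𝕜)
    (hf : ∀ i, ((f i).map K.subtype).HasSumAt α (v i)) (c₀ : 𝕜[X]) (c : ι → 𝕜[X])
    (hrel : (c₀ : 𝕜⟦X⟧) + ∑ i, (c i : 𝕜⟦X⟧) * (f i).map K.subtype = 0) :
    (L (c₀.eval (α : 𝕜)) : 𝕜) + ∑ i, (L ((c i).eval (α : 𝕜)) : 𝕜) * v i = 0 := by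
  have hrelL : mapLinear L c₀ + ∑ i, mapLinear L (c i) * f i = 0 := by
    rw [show K.subtype = algebraMap K 𝕜 from rfl] at hrel
    simpa only [map_add, map_sum, map_zero, mapLinear_mul_map] using congrArg (mapLinear L) hrel
  have hcont : Continuous K.subtype := continuous_subtype_val
  have hsum := ((hasSumAt_mapLinear_coe L c₀ α).map K.subtype hcont).add
    (HasSumAt.sum (s := Finset.univ) fun i _ =>
      ((hasSumAt_mapLinear_coe L (c i) α).map K.subtype hcont).mul (hf i))
  have hrel' := congrArg (PowerSeries.map K.subtype) hrelL
  simp only [map_add, map_sum, map_mul, map_zero] at hrel'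
  rw [hrel'] at hsum
  exact hsum.unique (hasSumAt_zero _)

theorem stmt14_general (k₀ : Subfield ℂ)
    (N ℓ : ℕ) (hℓN : ℓ ≤ N)
    (f : Fin N → PowerSeries k₀)
    (α : k₀)
    (hconv : ∀ i, Summable fun n : ℕ => (PowerSeries.coeff (R := k₀) n (f i) : ℂ) * (α : ℂ) ^ n)
    (fval : Fin N → ℂ)
    (hfval : ∀ i, fval i = ∑' n : ℕ, (PowerSeries.coeff (R := k₀) n (f i) : ℂ) * (α : ℂ) ^ n)
    (hspec : ∀ (lam₀ : ℂ) (lam : Fin N → ℂ), IsAlgebraic ℚ lam₀ →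
      (∀ i, IsAlgebraic ℚ (lam i)) → lam₀ + ∑ i, lam i * fval i = 0 →
      ∃ c : Fin (N + 1) → Polynomial ℂ,
        (∀ (i : Fin (N + 1)) (n : ℕ), IsAlgebraic ℚ ((c i).coeff n)) ∧
        ((c 0 : PowerSeries ℂ)) +
          ∑ i : Fin N, ((c i.succ : PowerSeries ℂ)) * (f i).map k₀.subtype = 0 ∧
        (c 0).eval (α : ℂ) = lam₀ ∧ ∀ i : Fin N, (c i.succ).eval (α : ℂ) = lam i)
    (hindep : LinearIndependent k₀ (fun i : Fin ℓ => fval (Fin.castLE hℓN i))) :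
    ∀ lam : Fin ℓ → ℂ, (∀ i, IsAlgebraic ℚ (lam i)) →
      ∑ i, lam i * fval (Fin.castLE hℓN i) = 0 → ∀ i, lam i = 0 := by
  intro lam hlam hsum i₀
  have he := Fin.castLE_injective hℓN
  set lam' : Fin N → ℂ := Function.extend (Fin.castLE hℓN) lam 0
  have hlam' : ∀ i, IsAlgebraic ℚ (lam' i) := fun i => by
    by_cases hi : ∃ j, Fin.castLE hℓN j = i
    · obtain ⟨j, rfl⟩ := hi
      simpa only [lam', he.extend_apply] using hlam j
    · simpa only [lam', Function.extend_apply' _ _ _ hi, Pi.zero_apply] using isAlgebraic_zero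
  have hsum' : 0 + ∑ i, lam' i * fval i = 0 := by
    rw [zero_add, he.sum_apply_extend_zero lam (fun i x => x * fval i) fun _ => zero_mul _, hsum]
  obtain ⟨c, -, hrel, hc₀, hc⟩ := hspec 0 lam' isAlgebraic_zero hlam' hsum'
  have hf : ∀ i, ((f i).map k₀.subtype).HasSumAt α (fval i) := fun i => by
    rw [HasSumAt, hfval i]
    simpa only [PowerSeries.coeff_map, Subfield.subtype_apply] using (hconv i).hasSum
  refine (Module.forall_dual_apply_eq_zero_iff k₀ (lam i₀)).mp fun L => ?_
  have hL := k₀.dual_add_sum_mul_eq_zero L α f fval hf (c 0) (fun i => c i.succ) hrel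
  simp only [hc₀, hc, map_zero, ZeroMemClass.coe_zero, zero_add] at hL
  rw [he.sum_apply_extend_zero lam (fun i x => (L x : ℂ) * fval i) fun _ => by simp] at hL
  exact Fintype.linearIndependent_iff.mp hindep (fun j => L (lam j)) hL i₀

/-- Linear-independence lifting: assume the specialization property (every affine-linear
relation over `ℚ̄` among the values `f₁(α),…,f_N(α)` comes, by specializing `z = α`, from
a relation `Q(z, f₁(z),…,f_N(z)) = 0` with `Q` affine-linear in the `X`-variables with
coefficients in `ℚ̄[z]`). If `f₁(α),…,f_ℓ(α)` are linearly independent over the number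
field `k₀`, then they are linearly independent over `ℚ̄`. -/
theorem stmt14 (k₀ : Subfield ℂ) (hnf : FiniteDimensional ℚ k₀)
    (N ℓ : ℕ) (hℓ1 : 1 ≤ ℓ) (hℓN : ℓ ≤ N)
    (f : Fin N → PowerSeries k₀)
    (α : k₀) (hα0 : 0 < ‖(α : ℂ)‖) (hα1 : ‖(α : ℂ)‖ < 1)
    (hconv : ∀ i, Summable fun n : ℕ => (PowerSeries.coeff (R := k₀) n (f i) : ℂ) * (α : ℂ) ^ n)
    (fval : Fin N → ℂ)
    (hfval : ∀ i, fval i = ∑' n : ℕ, (PowerSeries.coeff (R := k₀) n (f i) : ℂ) * (α : ℂ) ^ n)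
    (hspec : ∀ (lam₀ : ℂ) (lam : Fin N → ℂ), IsAlgebraic ℚ lam₀ →
      (∀ i, IsAlgebraic ℚ (lam i)) → lam₀ + ∑ i, lam i * fval i = 0 →
      ∃ c : Fin (N + 1) → Polynomial ℂ,
        (∀ (i : Fin (N + 1)) (n : ℕ), IsAlgebraic ℚ ((c i).coeff n)) ∧
        ((c 0 : PowerSeries ℂ)) +
          ∑ i : Fin N, ((c i.succ : PowerSeries ℂ)) * (f i).map k₀.subtype = 0 ∧
        (c 0).eval (α : ℂ) = lam₀ ∧ ∀ i : Fin N, (c i.succ).eval (α : ℂ) = lam i)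
    (hindep : LinearIndependent k₀ (fun i : Fin ℓ => fval (Fin.castLE hℓN i))) :
    ∀ lam : Fin ℓ → ℂ, (∀ i, IsAlgebraic ℚ (lam i)) →
      ∑ i, lam i * fval (Fin.castLE hℓN i) = 0 → ∀ i, lam i = 0 :=
  stmt14_general k₀ N ℓ hℓN f α hconv fval hfval hspec hindep
end

section
/- Let q ≥ 2 and let E₀ ⊆ ℂ∖{0} be a set. Suppose f is a function meromorphic on the union ⋃_{h≥0} E₀^{q^{-h}} (where E₀^{q^{-h}} = {w ∈ ℂ : w^{q^h} ∈ E₀}) and that f satisfies a linear functional relation σ^m(f) = Σ_{ℓ=0}^{m-1} b_ℓ·σ^ℓ(f), where σ(f)(z) = f(z^q) and each b_ℓ is meromorphic on ℂ∖{0}. Then f extends to a meromorphic function on ⋃_{h≥−1} E₀^{q^{-h}}, hence by iteration, if E₀ = E(ε) is an open set whose forward orbit under z ↦ z^{q^{-1}} avoids all ramification points of f and the b_ℓ, f extends meromorphically to ⋃_{h∈ℤ} E₀^{q^{-h}}. -/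
theorem meromorphicAt_comp_pow_iff {𝕜 E : Type*} [NontriviallyNormedField 𝕜] [CompleteSpace 𝕜]
    [CharZero 𝕜] [NormedAddCommGroup E] [NormedSpace 𝕜 E] {f : 𝕜 → E} {n : ℕ} (hn : n ≠ 0)
    {x : 𝕜} (hx : x ≠ 0) :
    MeromorphicAt (f ∘ (· ^ n)) x ↔ MeromorphicAt f (x ^ n) :=
  meromorphicAt_comp_iff_of_deriv_ne_zero (analyticAt_id.pow n) (by simp [hn, hx])

theorem pow_pow_mem_iUnion_of_le {M : Type*} [Monoid M] {E : Set M} {q k ℓ : ℕ} {x : M}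
    (hx : x ^ q ^ k ∈ E) (hℓ : ℓ ≤ k) :
    x ^ q ^ ℓ ∈ ⋃ h : ℕ, {w : M | w ^ q ^ h ∈ E} :=
  Set.mem_iUnion.mpr
    ⟨k - ℓ, by rwa [Set.mem_ofPred_eq, ← pow_mul, ← pow_add, Nat.add_sub_cancel' hℓ]⟩

/-- Since `z ↦ z ^ q ^ m` is locally biholomorphic away from `0`, meromorphy of `f` at
`x ^ q ^ m` can be read off the right-hand side of the relation near `x`. -/
theorem meromorphicAt_pow_pow_of_linear_relation {q m : ℕ} (hq : q ≠ 0) {f : ℂ → ℂ}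
    {b : Fin m → ℂ → ℂ} {x : ℂ} (hx : x ≠ 0) (hb : ∀ ℓ, MeromorphicAt (b ℓ) x)
    (hf : ∀ ℓ : Fin m, MeromorphicAt f (x ^ q ^ (ℓ : ℕ)))
    (hrel : ∀ z : ℂ, z ≠ 0 → f (z ^ q ^ m) = ∑ ℓ : Fin m, b ℓ z * f (z ^ q ^ (ℓ : ℕ))) :
    MeromorphicAt f (x ^ q ^ m) := by
  rw [← meromorphicAt_comp_pow_iff (pow_ne_zero m hq) hx]
  have hsum : MeromorphicAt (fun z => ∑ ℓ : Fin m, b ℓ z * f (z ^ q ^ (ℓ : ℕ))) x :=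
    MeromorphicAt.fun_sum fun ℓ _ =>
      (hb ℓ).mul ((hf ℓ).comp_analyticAt (g := fun z : ℂ => z ^ q ^ (ℓ : ℕ)) (by fun_prop))
  refine hsum.congr (Filter.Eventually.filter_mono nhdsWithin_le_nhds ?_)
  filter_upwards [eventually_ne_nhds hx] with z hz
  exact (hrel z hz).symm

/-- Analytic continuation step: if `f` is meromorphic on `⋃_{h≥0} E₀^{q^{-h}}`
(where `E₀^{q^{-h}} = {w : w^{q^h} ∈ E₀}`) and satisfies a linear functional relation
`f(z^{q^m}) = Σ_{ℓ<m} b_ℓ(z) f(z^{q^ℓ})` with the `b_ℓ` meromorphic on `ℂ∖{0}`, then `f`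
extends to a function meromorphic on `⋃_{h≥−1} E₀^{q^{-h}}`, the extra piece being
`E₀^q = (z ↦ z^q)(E₀)`. -/
theorem stmt17 (q : ℕ) (hq : 2 ≤ q) (E₀ : Set ℂ) (hE₀ : (0 : ℂ) ∉ E₀)
    (f : ℂ → ℂ) (m : ℕ) (hm : 1 ≤ m) (b : Fin m → ℂ → ℂ)
    (hb : ∀ ℓ, MeromorphicOn (b ℓ) {z : ℂ | z ≠ 0})
    (hf : MeromorphicOn f (⋃ h : ℕ, {w : ℂ | w ^ q ^ h ∈ E₀}))
    (hrel : ∀ z : ℂ, z ≠ 0 →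
      f (z ^ q ^ m) = ∑ ℓ : Fin m, b ℓ z * f (z ^ q ^ (ℓ : ℕ))) :
    ∃ F : ℂ → ℂ,
      MeromorphicOn F (((fun z : ℂ => z ^ q) '' E₀) ∪ ⋃ h : ℕ, {w : ℂ | w ^ q ^ h ∈ E₀}) ∧
      ∀ z ∈ ⋃ h : ℕ, {w : ℂ | w ^ q ^ h ∈ E₀}, F z = f z := by
  refine ⟨f, ?_, fun _ _ => rfl⟩
  rintro _ (⟨z, hz, rfl⟩ | hU)
  · have hz0 : z ≠ 0 := fun h => hE₀ (h ▸ hz)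
    obtain ⟨x, hxz⟩ := IsAlgClosed.exists_pow_nat_eq z (by positivity : 0 < q ^ (m - 1))
    have hx0 : x ≠ 0 := (pow_ne_zero_iff (by positivity)).mp (hxz ▸ hz0)
    have hxm : x ^ q ^ m = z ^ q := by
      rw [← hxz, ← pow_mul, ← pow_succ, Nat.sub_add_cancel hm]
    show MeromorphicAt f (z ^ q)
    rw [← hxm]
    exact meromorphicAt_pow_pow_of_linear_relation (by omega) hx0 (fun ℓ => hb ℓ x hx0)
      (fun ℓ => hf _ (pow_pow_mem_iUnion_of_le (hxz ▸ hz) (by omega))) hrel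
  · exact hf _ hU
end
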